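/- For all natural numbers k, m, n, C(2n, n) · F(k·n + 2m) = Σ_{i=0}^{n} C(n, i)²·F(k·i + m)·L(k·(n−i) + m), where C(n, i) denotes the binomial coefficient. -/

import Mathlib

/-! Pairing the terms `i` and `n - i` of the sum and using the addition formula
`2 F(p + q) = F(p) L(q) + F(q) L(p)` turns each pair into `2 C(n,i)² F(kn + 2m)`;
the sum of the squares of a row of Pascal's triangle is the central binomial coefficient. -/

noncomputable def genFib (a b : ℝ) : ℕ → ℝ
  | 0 => 0
  | 1 => 1
  | n + 2 => a * genFib a b (n + 1) + b * genFib a b n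

noncomputable def genLuc (a b : ℝ) : ℕ → ℝ
  | 0 => 2
  | 1 => a
  | n + 2 => a * genLuc a b (n + 1) + b * genLuc a b n

open Finset

section Symmetrize

variable {R : Type*} [CommSemiring R]

theorem sum_range_succ_reflect (f : ℕ → R) (n : ℕ) :
    ∑ i ∈ range (n + 1), f (n - i) = ∑ i ∈ range (n + 1), f i := by
  simpa using sum_range_reflect f (n + 1)

theorem two_mul_sum_range_choose_sq_mul_of_add_reflect_eq (u : ℕ → R) (n : ℕ) (c : R)
    (hu : ∀ i ≤ n, u i + u (n - i) = c) :
    2 * ∑ i ∈ range (n + 1), (n.choose i : R) ^ 2 * u i = (2 * n).choose n * c := by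
  calc 2 * ∑ i ∈ range (n + 1), (n.choose i : R) ^ 2 * u i
      = ∑ i ∈ range (n + 1), (n.choose i : R) ^ 2 * u i
          + ∑ i ∈ range (n + 1), (n.choose (n - i) : R) ^ 2 * u (n - i) := by
        rw [two_mul, sum_range_succ_reflect (fun i ↦ (n.choose i : R) ^ 2 * u i)]
    _ = ∑ i ∈ range (n + 1), (n.choose i : R) ^ 2 * c := by
        rw [← sum_add_distrib]
        refine sum_congr rfl fun i hi ↦ ?_
        have hin : i ≤ n := mem_range_succ_iff.mp hi
        rw [Nat.choose_symm hin, ← mul_add, hu i hin]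
    _ = (2 * n).choose n * c := by
        rw [← sum_mul, ← Nat.sum_range_choose_sq]
        push_cast
        rfl

end Symmetrize

section GenFib

variable (a b : ℝ)

@[simp]
theorem genFib_add_two (n : ℕ) :
    genFib a b (n + 2) = a * genFib a b (n + 1) + b * genFib a b n := by
  rw [genFib]

@[simp]
theorem genLuc_add_two (n : ℕ) :
    genLuc a b (n + 2) = a * genLuc a b (n + 1) + b * genLuc a b n := by
  rw [genLuc]

theorem genLuc_eq_two_mul_genFib_succ_sub (n : ℕ) :
    genLuc a b n = 2 * genFib a b (n + 1) - a * genFib a b n := by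
  induction n using Nat.twoStepInduction with
  | zero => simp [genFib, genLuc]
  | one => simp [genFib, genLuc]; ring
  | more n ih₀ ih₁ =>
    rw [genLuc_add_two, ih₀, ih₁, genFib_add_two a b (n + 1), genFib_add_two]
    ring

theorem two_mul_genFib_add (p q : ℕ) :
    2 * genFib a b (p + q) = genFib a b p * genLuc a b q + genFib a b q * genLuc a b p := by
  induction q using Nat.twoStepInduction with
  | zero => simp [genFib, genLuc]; ring
  | one => simp [genFib, genLuc, genLuc_eq_two_mul_genFib_succ_sub a b p]; ring
  | more q ih₀ ih₁ =>
    rw [← add_assoc, genFib_add_two, genFib_add_two, genLuc_add_two, add_assoc]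
    linear_combination a * ih₁ + b * ih₀

end GenFib

theorem genFib_central_binomial_identity (a b : ℝ) (k m n : ℕ) :
    ((2 * n).choose n : ℝ) * genFib a b (k * n + 2 * m) =
      ∑ i ∈ Finset.range (n + 1),
        (n.choose i : ℝ) ^ 2 * genFib a b (k * i + m) * genLuc a b (k * (n - i) + m) := by
  have hpair : ∀ i ≤ n,
      genFib a b (k * i + m) * genLuc a b (k * (n - i) + m)
        + genFib a b (k * (n - i) + m) * genLuc a b (k * (n - (n - i)) + m)
        = 2 * genFib a b (k * n + 2 * m) := by
    intro i hin
    have hk : k * i + k * (n - i) = k * n := by rw [← mul_add, Nat.add_sub_cancel' hin]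
    have hidx : k * i + m + (k * (n - i) + m) = k * n + 2 * m := by omega
    rw [Nat.sub_sub_self hin, ← hidx, two_mul_genFib_add]
  have h := two_mul_sum_range_choose_sq_mul_of_add_reflect_eq _ n _ hpair
  simp only [← mul_assoc] at h
  linarith
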